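/- The derivative of E_s satisfies dE_s/ds = -(g/(8 e_s²))(P_s^+ - P_s^-), and this derivative is Hermitian (equals its own adjoint). -/

import Mathlib

/-!
Up to the constant matrix `½ [[0, -1], [1, 0]]`, `E_s = (g σ_z - s σ_x) / (4 e_s)`.
Since `4 e_s² = s² + g²`, the coefficients have derivatives `-g s / (16 e_s³)` and
`g² / (16 e_s³)`, so `dE_s/ds = -(g / (16 e_s³)) (s σ_z + g σ_x) = -(g / (8 e_s³)) H_s`,
while `P_s⁺ - P_s⁻ = H_s / e_s`.
Being a real combination of Pauli matrices, the derivative is Hermitian.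
-/

open Matrix

/-- The half-gap `e_s = (1/2)√(s² + g²)`. -/
noncomputable def eLZ (g s : ℝ) : ℝ := (1/2) * Real.sqrt (s^2 + g^2)

/-- The Landau-Zener Hamiltonian `H_s = (1/2)[[s, g],[g, -s]]`. -/
noncomputable def HLZ (g s : ℝ) : Matrix (Fin 2) (Fin 2) ℂ :=
  (1/2 : ℂ) • !![(s : ℂ), (g : ℂ); (g : ℂ), -(s : ℂ)]

/-- The eigenprojection `P_s⁺` of `H_s` for the eigenvalue `+e_s`. -/
noncomputable def PpLZ (g s : ℝ) : Matrix (Fin 2) (Fin 2) ℂ :=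
  (1/2 : ℂ) • (1 + ((eLZ g s : ℝ) : ℂ)⁻¹ • HLZ g s)

/-- The eigenprojection `P_s⁻` of `H_s` for the eigenvalue `-e_s`. -/
noncomputable def PmLZ (g s : ℝ) : Matrix (Fin 2) (Fin 2) ℂ :=
  (1/2 : ℂ) • (1 - ((eLZ g s : ℝ) : ℂ)⁻¹ • HLZ g s)

/-- The (real) coherence `E_s = (1/(4e_s))[[g, -s-2e_s],[-s+2e_s, -g]]`. -/
noncomputable def ELZ (g s : ℝ) : Matrix (Fin 2) (Fin 2) ℂ :=
  ((4 * eLZ g s : ℝ) : ℂ)⁻¹ •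
    !![(g : ℂ), ((-s - 2 * eLZ g s : ℝ) : ℂ); ((-s + 2 * eLZ g s : ℝ) : ℂ), -(g : ℂ)]

attribute [local instance] Matrix.normedAddCommGroup Matrix.normedSpace

def pauliX : Matrix (Fin 2) (Fin 2) ℂ := !![0, 1; 1, 0]

def pauliZ : Matrix (Fin 2) (Fin 2) ℂ := !![1, 0; 0, -1]

lemma HLZ_eq (g s : ℝ) :
    HLZ g s = (1/2 : ℂ) • ((s : ℂ) • pauliZ + (g : ℂ) • pauliX) := by
  ext i j
  fin_cases i <;> fin_cases j <;> simp [HLZ, pauliX, pauliZ]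

lemma PpLZ_sub_PmLZ (g s : ℝ) :
    PpLZ g s - PmLZ g s = ((eLZ g s : ℝ) : ℂ)⁻¹ • HLZ g s := by
  unfold PpLZ PmLZ
  module

lemma eLZ_pos {g : ℝ} (hg : g ≠ 0) (s : ℝ) : 0 < eLZ g s := by
  unfold eLZ
  have : 0 < s ^ 2 + g ^ 2 := by positivity
  positivity

lemma four_mul_eLZ_sq (g s : ℝ) : 4 * eLZ g s ^ 2 = s ^ 2 + g ^ 2 := by
  rw [eLZ, mul_pow, Real.sq_sqrt (by positivity)]
  ring

lemma hasDerivAt_eLZ {g : ℝ} (hg : g ≠ 0) (s : ℝ) :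
    HasDerivAt (eLZ g) (s / (4 * eLZ g s)) s := by
  have hsum : s ^ 2 + g ^ 2 ≠ 0 := by positivity
  have h := (((hasDerivAt_pow 2 s).add_const (g ^ 2)).sqrt hsum).const_mul (1 / 2 : ℝ)
  refine h.congr_deriv ?_
  simp only [eLZ]
  field_simp
  ring

lemma hasDerivAt_const_div_eLZ {g : ℝ} (hg : g ≠ 0) (s : ℝ) :
    HasDerivAt (fun t => g / (4 * eLZ g t)) (-(g * s) / (16 * eLZ g s ^ 3)) s := by
  have he := (eLZ_pos hg s).ne'
  refine ((hasDerivAt_const s g).div ((hasDerivAt_eLZ hg s).const_mul 4)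
    (by positivity)).congr_deriv ?_
  field_simp
  ring

lemma hasDerivAt_id_div_eLZ {g : ℝ} (hg : g ≠ 0) (s : ℝ) :
    HasDerivAt (fun t => t / (4 * eLZ g t)) (g ^ 2 / (16 * eLZ g s ^ 3)) s := by
  have he := (eLZ_pos hg s).ne'
  refine ((hasDerivAt_id s).div ((hasDerivAt_eLZ hg s).const_mul 4)
    (by positivity)).congr_deriv ?_
  simp only [id]
  field_simp
  linear_combination 16 * four_mul_eLZ_sq g s

lemma ELZ_eq {g : ℝ} (hg : g ≠ 0) (s : ℝ) :
    ELZ g s = ((g / (4 * eLZ g s) : ℝ) : ℂ) • pauliZ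
      - ((s / (4 * eLZ g s) : ℝ) : ℂ) • pauliX + (1 / 2 : ℂ) • !![0, -1; 1, 0] := by
  have he : ((eLZ g s : ℝ) : ℂ) ≠ 0 := by exact_mod_cast (eLZ_pos hg s).ne'
  ext i j
  fin_cases i <;> fin_cases j <;> simp [ELZ, pauliX, pauliZ] <;> field_simp <;> ring

lemma pauliX_isHermitian : pauliX.IsHermitian := by
  ext i j
  fin_cases i <;> fin_cases j <;> simp [pauliX]

lemma pauliZ_isHermitian : pauliZ.IsHermitian := by
  ext i j
  fin_cases i <;> fin_cases j <;> simp [pauliZ]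

/-- `dE_s/ds = -(g/(8 e_s²))(P_s⁺ - P_s⁻)`, and this derivative is Hermitian. -/
theorem deriv_ELZ (g s : ℝ) (hg : 0 < g) :
    HasDerivAt (fun t : ℝ => ELZ g t)
      (-(((g / (8 * (eLZ g s)^2) : ℝ) : ℂ) • (PpLZ g s - PmLZ g s))) s ∧
    (-(((g / (8 * (eLZ g s)^2) : ℝ) : ℂ) • (PpLZ g s - PmLZ g s)))ᴴ
      = -(((g / (8 * (eLZ g s)^2) : ℝ) : ℂ) • (PpLZ g s - PmLZ g s)) := by
  have he : ((eLZ g s : ℝ) : ℂ) ≠ 0 := by exact_mod_cast (eLZ_pos hg.ne' s).ne'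
  have hderiv : -(((g / (8 * (eLZ g s)^2) : ℝ) : ℂ) • (PpLZ g s - PmLZ g s)) =
      ((-(g * s) / (16 * eLZ g s ^ 3) : ℝ) : ℂ) • pauliZ
        - ((g ^ 2 / (16 * eLZ g s ^ 3) : ℝ) : ℂ) • pauliX := by
    rw [PpLZ_sub_PmLZ, HLZ_eq]
    ext i j
    fin_cases i <;> fin_cases j <;> simp [pauliX, pauliZ] <;> field_simp <;> ring
  rw [hderiv]
  refine ⟨?_, (pauliZ_isHermitian.smul (Complex.conj_ofReal _)).sub
    (pauliX_isHermitian.smul (Complex.conj_ofReal _))⟩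
  rw [show (fun t => ELZ g t) = _ from funext (ELZ_eq hg.ne')]
  exact (((hasDerivAt_const_div_eLZ hg.ne' s).ofReal_comp.smul_const pauliZ).sub
    ((hasDerivAt_id_div_eLZ hg.ne' s).ofReal_comp.smul_const pauliX)).add_const _
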